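/- arXiv:2312.12116 — 5 statements merged into one kernel-verified Lean document; each statement's English description precedes it below -/
import Mathlib

section
/- Let q be a prime power with 3 ∣ q − 1, and let α ∈ GF(q) be an element with α³ = 1 and α ≠ 1. Set B = α and E = α². Then for any K ≠ 0 in GF(q), the code C = {(b,m,e) : B·b + m + E·e = K} contains no cyclic error: there are no two distinct codewords of the forms (a,b,c) and (b,c,a). -/
/-- If 3 ∣ q − 1 and α³ = 1, α ≠ 1 in GF(q), then with B = α, E = α² the code
B·b + m + E·e = K (K ≠ 0) contains no cyclic error: no distinct codewords
(a,b,c) and (b,c,a). -/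
theorem stmt_6 {F : Type*} [Field F] [Fintype F]
    (h3 : 3 ∣ Fintype.card F - 1) (α : F) (hα : α ^ 3 = 1) (hα1 : α ≠ 1)
    (K : F) (hK : K ≠ 0) :
    ∀ a b c : F, α * a + b + α ^ 2 * c = K → α * b + c + α ^ 2 * a = K →
      a = b ∧ b = c := by
  intro a b c h1 h2
  exfalso
  apply hK
  have h1α : (1 : F) - α ≠ 0 := sub_ne_zero.mpr (Ne.symm hα1)
  have hz : (1 - α) * K = 0 := by linear_combination α * h1 - h2 - c * hα
  exact (mul_eq_zero.mp hz).resolve_left h1α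
end

section
/- Let q be an odd prime power and B, E, K ∈ GF(q) with B + 1 + E = 0 and B ≠ 1. Let P ∈ GF(q), P ≠ 0, and define R = K − B·P. Suppose there exist x, y ∈ GF(q) with x ≠ y such that both (x, y, x − P) and (y, x, y − P) lie on the transversal removed during insertion, i.e., such that the extended code has codewords (x,y,q̂) and (y,x,q̂) where q̂ is the new symbol replacing the entry at positions with b − e = P. Then B·x + y + E·(x−P) = K and B·y + x + E·(y−P) = K imply 2·(x − y) = 0, contradicting x ≠ y. Hence the extended code has no transposition error of the form (x,y,q̂) ↔ (y,x,q̂). -/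
/-- In the insertion construction over GF(q) of odd characteristic with
B + 1 + E = 0, B ≠ 1, P ≠ 0: there can be no transposition error
(x,y,q̂) ↔ (y,x,q̂) in the added column, since the two underlying code
equations force 2·(x − y) = 0, contradicting x ≠ y. -/
theorem stmt_9 {F : Type*} [Field F] [Fintype F] (hchar : ringChar F ≠ 2)
    (B E K P : F) (hBE : B + 1 + E = 0) (hB1 : B ≠ 1) (hP : P ≠ 0)
    (x y : F) (hxy : x ≠ y)
    (h1 : B * x + y + E * (x - P) = K)
    (h2 : B * y + x + E * (y - P) = K) :
    False := by
  have hE : E = -(B + 1) := by linear_combination hBE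
  subst hE
  have h2ne : (2 : F) ≠ 0 := Ring.two_ne_zero hchar
  apply hxy
  have : (2 : F) * (x - y) = 0 := by linear_combination h2 - h1
  have := mul_eq_zero.mp this
  rcases this with h | h
  · exact absurd h h2ne
  · exact sub_eq_zero.mp h
end

section
/- Let q be an odd prime power, B, E, K ∈ GF(q) with B + 1 + E = 0, B ∉ {0,1,-1,E,-E}, E ∉ {0,1,-1}, K ≠ 0, and P ≠ 0 with K ≠ (B−1)·P and K ≠ (1−E)·P. Suppose the base code {(b,m,e) : B·b + m + E·e = K} has no cyclic errors. Then in the extended code obtained by insertion of a new symbol q̂ along the transversal b − e = P (with new row entries M(q̂,e) = K − B·P + e and new column entries M(b,q̂) = K + E·P + b, and M(q̂,q̂) = q̂), there is no pair of distinct codewords of the forms (b, q̂, e) and (e, b, q̂), and no pair of the forms (b, q̂, e) and (q̂, e, b). -/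
/-- Insertion construction (Theorem on permutation-error-free codes by
insertion): over GF(q) of odd characteristic, with B + 1 + E = 0,
B ∉ {0,1,-1,E,-E}, E ∉ {0,1,-1}, K ≠ 0, P ≠ 0, K ≠ (B−1)·P, K ≠ (1−E)·P,
and assuming the base code has no cyclic errors, the extended code has no
pair of distinct codewords of the forms (b,q̂,e) & (e,b,q̂), nor (b,q̂,e) &
(q̂,e,b).  Here (b,q̂,e) is a codeword iff b − e = P, (e,b,q̂) is a codeword
iff b = (K + E·P) + e (added column), and (q̂,e,b) is a codeword iff
e = (K − B·P) + b (added row). -/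
theorem stmt_10 {F : Type*} [Field F] [Fintype F] (hchar : ringChar F ≠ 2)
    (B E K P : F) (hBE : B + 1 + E = 0)
    (hB0 : B ≠ 0) (hB1 : B ≠ 1) (hBm1 : B ≠ -1) (hBEne : B ≠ E) (hBmE : B ≠ -E)
    (hE0 : E ≠ 0) (hE1 : E ≠ 1) (hEm1 : E ≠ -1)
    (hK : K ≠ 0) (hP : P ≠ 0)
    (hK1 : K ≠ (B - 1) * P) (hK2 : K ≠ (1 - E) * P)
    (hcyc : ∀ a b c : F, B * a + b + E * c = K → B * b + c + E * a = K →
      a = b ∧ b = c) :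
    ∀ b e : F,
      ¬ (b - e = P ∧ b = (K + E * P) + e) ∧
      ¬ (b - e = P ∧ e = (K - B * P) + b) := by
  intro b e
  refine ⟨fun ⟨h1, h2⟩ => hK2 ?_, fun ⟨h1, h2⟩ => hK1 ?_⟩
  · linear_combination h1 - h2
  · linear_combination -h2 - h1
end

section
/- Let C₁ ⊆ A₁³ and C₂ ⊆ A₂³ be length-3 codes over alphabets A₁, A₂. Suppose C₁ detects all cyclic errors and contains no triple word, and C₂ detects all errors of some type T ∈ {single, transposition, twin, jump transposition, jump twin} while C₁ also detects type T. Then the product code C = {((b₁,b₂),(m₁,m₂),(e₁,e₂)) : (b₁,m₁,e₁) ∈ C₁, (b₂,m₂,e₂) ∈ C₂} over A₁ × A₂ detects all errors of type T, detects all cyclic errors, and contains no triple word. -/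
/-- The classical error types for length-3 codes (other than cyclic/triple). -/
inductive ErrorType
  | single
  | transposition
  | twin
  | jumpTransposition
  | jumpTwin

/-- Detection of a given error type by a length-3 code. -/
def Detects {A : Type*} (C : Set (A × A × A)) : ErrorType → Prop
  | .single =>
      ∀ b m e b' m' e', (b, m, e) ∈ C → (b', m', e') ∈ C →
        ((b = b' ∧ m = m') ∨ (b = b' ∧ e = e') ∨ (m = m' ∧ e = e')) →
        b = b' ∧ m = m' ∧ e = e'
  | .transposition =>
      (∀ a b c, (a, b, c) ∈ C → (b, a, c) ∈ C → a = b) ∧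
      (∀ a b c, (a, b, c) ∈ C → (a, c, b) ∈ C → b = c)
  | .twin =>
      (∀ a b c, (a, a, c) ∈ C → (b, b, c) ∈ C → a = b) ∧
      (∀ a b c, (a, b, b) ∈ C → (a, c, c) ∈ C → b = c)
  | .jumpTransposition =>
      ∀ a b c, (a, b, c) ∈ C → (c, b, a) ∈ C → a = c
  | .jumpTwin =>
      ∀ a b c, (a, b, a) ∈ C → (c, b, c) ∈ C → a = c

/-- Detection of cyclic errors. -/
def DetectsCyclic {A : Type*} (C : Set (A × A × A)) : Prop :=
  ∀ a b c, (a, b, c) ∈ C → (b, c, a) ∈ C → a = b ∧ b = c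

/-- The code contains no triple word. -/
def NoTripleWord {A : Type*} (C : Set (A × A × A)) : Prop :=
  ∀ a, (a, a, a) ∉ C

/-- The direct product of two length-3 codes. -/
def prodCode {A₁ A₂ : Type*} (C₁ : Set (A₁ × A₁ × A₁)) (C₂ : Set (A₂ × A₂ × A₂)) :
    Set ((A₁ × A₂) × (A₁ × A₂) × (A₁ × A₂)) :=
  {w | (w.1.1, w.2.1.1, w.2.2.1) ∈ C₁ ∧ (w.1.2, w.2.1.2, w.2.2.2) ∈ C₂}

/-- Product construction: if C₁ detects all cyclic errors and has no triple
word, and both C₁ and C₂ detect errors of type T, then the product code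
detects type T, detects all cyclic errors, and has no triple word. -/
theorem stmt_14 {A₁ A₂ : Type*} (C₁ : Set (A₁ × A₁ × A₁)) (C₂ : Set (A₂ × A₂ × A₂))
    (hcyc₁ : DetectsCyclic C₁) (htriple₁ : NoTripleWord C₁)
    (T : ErrorType) (hT₁ : Detects C₁ T) (hT₂ : Detects C₂ T) :
    Detects (prodCode C₁ C₂) T ∧ DetectsCyclic (prodCode C₁ C₂) ∧
      NoTripleWord (prodCode C₁ C₂) := by

  refine ⟨?_, ?_, ?_⟩
  · cases T with
    | single =>
        rintro ⟨b₁, b₂⟩ ⟨m₁, m₂⟩ ⟨e₁, e₂⟩ ⟨b₁', b₂'⟩ ⟨m₁', m₂'⟩ ⟨e₁', e₂'⟩ ⟨h1, h2⟩ ⟨h1', h2'⟩ h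
        simp only [Prod.mk.injEq] at h ⊢
        obtain ⟨x1, x2, x3⟩ := hT₁ b₁ m₁ e₁ b₁' m₁' e₁' h1 h1' (by tauto)
        obtain ⟨y1, y2, y3⟩ := hT₂ b₂ m₂ e₂ b₂' m₂' e₂' h2 h2' (by tauto)
        tauto
    | transposition =>
        constructor
        · rintro ⟨a₁, a₂⟩ ⟨b₁, b₂⟩ ⟨c₁, c₂⟩ ⟨h1, h2⟩ ⟨h1', h2'⟩
          exact Prod.ext (hT₁.1 a₁ b₁ c₁ h1 h1') (hT₂.1 a₂ b₂ c₂ h2 h2')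
        · rintro ⟨a₁, a₂⟩ ⟨b₁, b₂⟩ ⟨c₁, c₂⟩ ⟨h1, h2⟩ ⟨h1', h2'⟩
          exact Prod.ext (hT₁.2 a₁ b₁ c₁ h1 h1') (hT₂.2 a₂ b₂ c₂ h2 h2')
    | twin =>
        constructor
        · rintro ⟨a₁, a₂⟩ ⟨b₁, b₂⟩ ⟨c₁, c₂⟩ ⟨h1, h2⟩ ⟨h1', h2'⟩
          exact Prod.ext (hT₁.1 a₁ b₁ c₁ h1 h1') (hT₂.1 a₂ b₂ c₂ h2 h2')
        · rintro ⟨a₁, a₂⟩ ⟨b₁, b₂⟩ ⟨c₁, c₂⟩ ⟨h1, h2⟩ ⟨h1', h2'⟩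
          exact Prod.ext (hT₁.2 a₁ b₁ c₁ h1 h1') (hT₂.2 a₂ b₂ c₂ h2 h2')
    | jumpTransposition =>
        rintro ⟨a₁, a₂⟩ ⟨b₁, b₂⟩ ⟨c₁, c₂⟩ ⟨h1, h2⟩ ⟨h1', h2'⟩
        exact Prod.ext (hT₁ a₁ b₁ c₁ h1 h1') (hT₂ a₂ b₂ c₂ h2 h2')
    | jumpTwin =>
        rintro ⟨a₁, a₂⟩ ⟨b₁, b₂⟩ ⟨c₁, c₂⟩ ⟨h1, h2⟩ ⟨h1', h2'⟩
        exact Prod.ext (hT₁ a₁ b₁ c₁ h1 h1') (hT₂ a₂ b₂ c₂ h2 h2')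
  · rintro ⟨a₁, a₂⟩ ⟨b₁, b₂⟩ ⟨c₁, c₂⟩ ⟨h1, h2⟩ ⟨h1', h2'⟩
    obtain ⟨e1, e2⟩ := hcyc₁ a₁ b₁ c₁ h1 h1'
    exact absurd h1 (by subst e1; subst e2; exact htriple₁ a₁)
  · rintro ⟨a₁, a₂⟩ ⟨h1, h2⟩
    exact htriple₁ a₁ h1
end

section
/- For q = 37 (a prime with 3 ∣ 37 − 1 = 36), the elements B = 10 and E = 26 of ℤ/37ℤ satisfy B³ = 1, E = B², and B + 1 + E ≡ 0 (mod 37). Consequently, for any K with 1 ≤ K ≤ 36, the code {(b,m,e) ∈ (ℤ/37ℤ)³ : 10·b + m + 26·e ≡ K (mod 37)} detects all single, adjacent transposition, twin, jump transposition, jump twin, and cyclic errors, and contains no triple word. -/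
/-- In ℤ/37ℤ (with 3 ∣ 36), B = 10 and E = 26 satisfy B³ = 1, E = B² and
B + 1 + E = 0; consequently for any K ≠ 0 the code 10·b + m + 26·e = K
detects all single, transposition, twin, jump transposition, jump twin and
cyclic errors, and contains no triple word. -/
theorem stmt_17 :
    ((10 : ZMod 37) ^ 3 = 1 ∧ (26 : ZMod 37) = 10 ^ 2 ∧
      (10 : ZMod 37) + 1 + 26 = 0) ∧
    ∀ K : ZMod 37, K ≠ 0 →
      -- single errors
      ((∀ b m e b' m' e' : ZMod 37,
          10 * b + m + 26 * e = K → 10 * b' + m' + 26 * e' = K →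
          ((b = b' ∧ m = m' → e = e') ∧ (b = b' ∧ e = e' → m = m') ∧
           (m = m' ∧ e = e' → b = b'))) ∧
      -- adjacent transposition errors
      (∀ a b c : ZMod 37, 10 * a + b + 26 * c = K → 10 * b + a + 26 * c = K → a = b) ∧
      (∀ a b c : ZMod 37, 10 * a + b + 26 * c = K → 10 * a + c + 26 * b = K → b = c) ∧
      -- adjacent twin errors
      (∀ a b c : ZMod 37, 10 * a + a + 26 * c = K → 10 * b + b + 26 * c = K → a = b) ∧
      (∀ a b c : ZMod 37, 10 * a + b + 26 * b = K → 10 * a + c + 26 * c = K → b = c) ∧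
      -- jump transposition errors
      (∀ a b c : ZMod 37, 10 * a + b + 26 * c = K → 10 * c + b + 26 * a = K → a = c) ∧
      -- jump twin errors
      (∀ a b c : ZMod 37, 10 * a + b + 26 * a = K → 10 * c + b + 26 * c = K → a = c) ∧
      -- cyclic errors
      (∀ a b c : ZMod 37, 10 * a + b + 26 * c = K → 10 * b + c + 26 * a = K →
        a = b ∧ b = c) ∧
      -- no triple word
      (∀ a : ZMod 37, 10 * a + a + 26 * a ≠ K)) := by

  have h37 : (37 : ZMod 37) = 0 := by decide
  refine ⟨⟨by decide, by decide, by decide⟩, fun K hK => ?_⟩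
  refine ⟨?_, ?_, ?_, ?_, ?_, ?_, ?_, ?_, ?_⟩
  · intro b m e b' m' e' h1 h2
    refine ⟨?_, ?_, ?_⟩
    · rintro ⟨rfl, rfl⟩
      linear_combination (10 : ZMod 37) * h1 - 10 * h2 + (7 * (e' - e)) * h37
    · rintro ⟨rfl, rfl⟩; linear_combination h1 - h2
    · rintro ⟨rfl, rfl⟩
      linear_combination (26 : ZMod 37) * h1 - 26 * h2 + (7 * (b' - b)) * h37
  · intro a b c h1 h2
    linear_combination (33 : ZMod 37) * h1 - 33 * h2 + (8 * (b - a)) * h37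
  · intro a b c h1 h2
    linear_combination (34 : ZMod 37) * h1 - 34 * h2 + (23 * (b - c)) * h37
  · intro a b c h1 h2
    linear_combination (27 : ZMod 37) * h1 - 27 * h2 + (8 * (b - a)) * h37
  · intro a b c h1 h2
    linear_combination (11 : ZMod 37) * h1 - 11 * h2 + (8 * (c - b)) * h37
  · intro a b c h1 h2
    linear_combination (30 : ZMod 37) * h1 - 30 * h2 + (13 * (a - c)) * h37
  · intro a b c h1 h2
    linear_combination (36 : ZMod 37) * h1 - 36 * h2 + (35 * (c - a)) * h37
  · intro a b c h1 h2
    exact absurd (by linear_combination (-330 : ZMod 37) * h1 + 33 * h2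
      + (-8 * K + 66 * a + 231 * c) * h37) hK
  · intro a h
    exact hK (by linear_combination -h + a * h37)
end
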